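/- arXiv:1801.06404 — 3 statements merged into one kernel-verified Lean document; each statement's English description precedes it below -/
import Mathlib

section
/- The porous exponential domination number of the King grid K_7 equals 4. -/
/-!
Distances in the King grid are sup-distances of coordinates, so all weights are explicit, and one
checks vertex by vertex that `{(1,1), (1,5), (5,1), (5,5)}` dominates `K_7`. Conversely, a
dominating set with at most three elements must have an element within distance `2` of every
vertex, since a vertex that is farther from all of them receives at most `3 · 1/4`. The four
corners are pairwise at distance `6 > 2 + 2`, so no element serves two of them, and the set has at
least four elements after all.
-/

open SimpleGraph Finset

/-- The weight `2^(1 - dist(u,v))` that vertex `u` sends to vertex `v` in graph `G`. -/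
noncomputable def expWeight {V : Type*} (G : SimpleGraph V) (u v : V) : ℝ :=
  (2 : ℝ) ^ ((1 : ℤ) - (G.dist u v : ℤ))

/-- `D` is a porous exponential dominating set of `G` if every vertex receives total
weight at least `1`. -/
def IsPorousExpDomSet {V : Type*} [Fintype V] (G : SimpleGraph V) (D : Finset V) : Prop :=
  ∀ v : V, 1 ≤ ∑ d ∈ D, expWeight G d v

/-- The porous exponential domination number: the minimum cardinality of a porous
exponential dominating set. -/
noncomputable def porousExpDomNumber {V : Type*} [Fintype V] (G : SimpleGraph V) : ℕ :=
  sInf {k | ∃ D : Finset V, IsPorousExpDomSet G D ∧ D.card = k}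

/-- The King grid `K_n = P_n ⊠ P_n`: vertices `(i,j)` with `1 ≤ i,j ≤ n`, two distinct
vertices adjacent iff both coordinates differ by at most 1. -/
def kingGrid (n : ℕ) : SimpleGraph (Fin n × Fin n) :=
  SimpleGraph.fromRel fun v w =>
    ((v.1 : ℤ) - (w.1 : ℤ)).natAbs ≤ 1 ∧ ((v.2 : ℤ) - (w.2 : ℤ)).natAbs ≤ 1

/-- The Slant grid `S_n`: the grid `P_n □ P_n` together with the diagonal edges
`(i,j) ~ (i+1,j+1)`. -/
def slantGrid (n : ℕ) : SimpleGraph (Fin n × Fin n) :=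
  SimpleGraph.fromRel fun v w =>
    ((w.1 : ℕ) = (v.1 : ℕ) + 1 ∧ (w.2 : ℕ) = (v.2 : ℕ)) ∨
    ((w.1 : ℕ) = (v.1 : ℕ) ∧ (w.2 : ℕ) = (v.2 : ℕ) + 1) ∨
    ((w.1 : ℕ) = (v.1 : ℕ) + 1 ∧ (w.2 : ℕ) = (v.2 : ℕ) + 1)

/-- The `n`-dimensional hypercube: vertices are `{0,1}^n`, adjacent iff they differ in
exactly one coordinate. -/
def hypercube (n : ℕ) : SimpleGraph (Fin n → Bool) :=
  SimpleGraph.fromRel fun u v => hammingDist u v = 1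

namespace SimpleGraph

variable {V : Type*} {G : SimpleGraph V}

theorem Walk.le_add_length_of_adj_le {f : V → ℕ} (hf : ∀ x y, G.Adj x y → f x ≤ f y + 1)
    {u v : V} (p : G.Walk u v) : f u ≤ f v + p.length := by
  induction p with
  | nil => simp
  | cons h p ih => grind [hf _ _ h, Walk.length_cons]

theorem exists_walk_length_le_of_descent {v : V} {f : V → ℕ}
    (hf : ∀ x, x ≠ v → ∃ y, G.Adj x y ∧ f y < f x) (u : V) :
    ∃ p : G.Walk u v, p.length ≤ f u := by
  induction hu : f u using Nat.strong_induction_on generalizing u with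
  | _ k ih =>
    by_cases huv : u = v
    · subst huv
      exact ⟨Walk.nil, Nat.zero_le _⟩
    obtain ⟨y, hadj, hy⟩ := hf u huv
    obtain ⟨p, hp⟩ := ih (f y) (hu ▸ hy) y rfl
    exact ⟨Walk.cons hadj p, by rw [Walk.length_cons]; omega⟩

theorem dist_eq_of_descent {v : V} {f : V → ℕ} (hv : f v = 0)
    (hadj : ∀ x y, G.Adj x y → f x ≤ f y + 1) (hdesc : ∀ x, x ≠ v → ∃ y, G.Adj x y ∧ f y < f x)
    (u : V) : G.dist u v = f u := by
  obtain ⟨p, hp⟩ := exists_walk_length_le_of_descent hdesc u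
  obtain ⟨q, hq⟩ := Reachable.exists_walk_length_eq_dist ⟨p⟩
  have := q.le_add_length_of_adj_le hadj
  exact le_antisymm ((dist_le p).trans hp) (by omega)

end SimpleGraph

def chebyshevDist {n : ℕ} (u v : Fin n × Fin n) : ℕ :=
  max ((u.1 : ℤ) - (v.1 : ℤ)).natAbs ((u.2 : ℤ) - (v.2 : ℤ)).natAbs

section KingGrid

variable {n : ℕ}

theorem chebyshevDist_lt (u v : Fin n × Fin n) : chebyshevDist u v < n := by
  have := u.1.isLt; have := u.2.isLt; have := v.1.isLt; have := v.2.isLt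
  simp only [chebyshevDist]; omega

theorem chebyshevDist_eq_zero {u v : Fin n × Fin n} : chebyshevDist u v = 0 ↔ u = v := by
  simp only [chebyshevDist, Prod.ext_iff, Fin.ext_iff]; omega

theorem chebyshevDist_triangle (u v w : Fin n × Fin n) :
    chebyshevDist u w ≤ chebyshevDist u v + chebyshevDist v w := by
  simp only [chebyshevDist]; omega

theorem kingGrid_adj {u v : Fin n × Fin n} :
    (kingGrid n).Adj u v ↔ u ≠ v ∧ chebyshevDist u v ≤ 1 := by
  simp only [kingGrid, fromRel_adj, chebyshevDist]
  constructor
  · rintro ⟨h, h' | h'⟩ <;> exact ⟨h, by omega⟩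
  · rintro ⟨h, h'⟩
    exact ⟨h, Or.inl (by omega)⟩

theorem Fin.exists_step_toward (a b : Fin n) :
    ∃ c : Fin n, ((a : ℤ) - (c : ℤ)).natAbs ≤ 1 ∧
      ((c : ℤ) - (b : ℤ)).natAbs = ((a : ℤ) - (b : ℤ)).natAbs - 1 := by
  rcases lt_trichotomy a.val b.val with h | h | h
  · exact ⟨⟨a + 1, by omega⟩, by dsimp only; omega⟩
  · exact ⟨a, by omega⟩
  · exact ⟨⟨a - 1, by omega⟩, by dsimp only; omega⟩

theorem kingGrid_exists_adj_chebyshevDist_lt {u v : Fin n × Fin n} (huv : u ≠ v) :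
    ∃ w, (kingGrid n).Adj u w ∧ chebyshevDist w v < chebyshevDist u v := by
  obtain ⟨c₁, hc₁, hc₁'⟩ := Fin.exists_step_toward u.1 v.1
  obtain ⟨c₂, hc₂, hc₂'⟩ := Fin.exists_step_toward u.2 v.2
  have hpos : chebyshevDist u v ≠ 0 := mt chebyshevDist_eq_zero.mp huv
  have hlt : chebyshevDist (c₁, c₂) v < chebyshevDist u v := by
    simp only [chebyshevDist] at hpos ⊢; omega
  have hne : u ≠ (c₁, c₂) := ne_of_apply_ne (chebyshevDist · v) hlt.ne'
  exact ⟨(c₁, c₂), kingGrid_adj.mpr ⟨hne, by simp only [chebyshevDist]; omega⟩, hlt⟩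

theorem kingGrid_dist (u v : Fin n × Fin n) : (kingGrid n).dist u v = chebyshevDist u v :=
  dist_eq_of_descent (f := (chebyshevDist · v)) (chebyshevDist_eq_zero.mpr rfl)
    (fun x y h => (chebyshevDist_triangle x y v).trans
      (by have := (kingGrid_adj.mp h).2; omega))
    (fun _ => kingGrid_exists_adj_chebyshevDist_lt) u

theorem kingGrid_preconnected : (kingGrid n).Preconnected := fun u v =>
  ⟨(exists_walk_length_le_of_descent (v := v) (f := (chebyshevDist · v))
    (fun _ => kingGrid_exists_adj_chebyshevDist_lt) u).choose⟩

end KingGrid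

section PorousExpDom

variable {V : Type*} {G : SimpleGraph V}

theorem expWeight_le_quarter {u v : V} (h : 3 ≤ G.dist u v) : expWeight G u v ≤ 1 / 4 :=
  calc expWeight G u v ≤ (2 : ℝ) ^ (-2 : ℤ) := zpow_le_zpow_right₀ one_le_two (by omega)
    _ = 1 / 4 := by norm_num

theorem expWeight_mul_two_pow {u v : V} {k : ℕ} (h : G.dist u v ≤ k + 1) :
    expWeight G u v * 2 ^ k = ((2 ^ (k + 1 - G.dist u v) : ℕ) : ℝ) := by
  have hexp : (1 : ℤ) - G.dist u v = ((k + 1 - G.dist u v : ℕ) : ℤ) - k := by omega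
  rw [expWeight, hexp, zpow_sub₀ two_ne_zero, zpow_natCast, zpow_natCast]
  push_cast
  field_simp

variable [Fintype V]

/-- Clearing the denominator `2 ^ k` turns domination into a decidable statement about `ℕ`. -/
theorem isPorousExpDomSet_iff_two_pow (k : ℕ) (hk : ∀ u v, G.dist u v ≤ k + 1) (D : Finset V) :
    IsPorousExpDomSet G D ↔ ∀ v, 2 ^ k ≤ ∑ d ∈ D, 2 ^ (k + 1 - G.dist d v) := by
  refine forall_congr' fun v => ?_
  rw [← mul_le_mul_iff_of_pos_right (by positivity : (0 : ℝ) < 2 ^ k), one_mul, sum_mul,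
    sum_congr rfl fun d _ => expWeight_mul_two_pow (hk d v)]
  exact_mod_cast Iff.rfl

theorem IsPorousExpDomSet.exists_dist_le_two {D : Finset V} (hD : IsPorousExpDomSet G D)
    (hcard : D.card ≤ 3) (v : V) : ∃ d ∈ D, G.dist d v ≤ 2 := by
  by_contra! hfar
  have hsum : ∑ d ∈ D, expWeight G d v ≤ D.card • (1 / 4 : ℝ) :=
    sum_le_card_nsmul D _ _ fun d hd => expWeight_le_quarter (hfar d hd)
  have hcard' : (D.card : ℝ) ≤ 3 := by exact_mod_cast hcard
  rw [nsmul_eq_mul] at hsum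
  linarith [hD v]

theorem IsPorousExpDomSet.card_le_of_pairwise_dist {D S : Finset V} (hG : G.Preconnected)
    (hD : IsPorousExpDomSet G D) (hS : ∀ s ∈ S, ∀ t ∈ S, s ≠ t → 4 < G.dist s t)
    (hS4 : S.card ≤ 4) : S.card ≤ D.card := by
  by_contra! hlt
  have hnear := hD.exists_dist_le_two (by omega)
  refine hlt.not_ge (card_le_card_of_forall_subsingleton (fun s d => G.dist d s ≤ 2)
    (fun s _ => hnear s) fun d _ s ⟨hs, hds⟩ t ⟨ht, hdt⟩ => ?_)
  by_contra hst
  linarith [hS s hs t ht hst, (hG s d).dist_triangle_left t, G.dist_comm (u := s) (v := d)]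

theorem porousExpDomNumber_eq_card {D : Finset V} (hD : IsPorousExpDomSet G D)
    (hmin : ∀ D' : Finset V, IsPorousExpDomSet G D' → D.card ≤ D'.card) :
    porousExpDomNumber G = D.card := by
  refine le_antisymm (Nat.sInf_le ⟨D, hD, rfl⟩) (le_csInf ⟨D.card, D, hD, rfl⟩ ?_)
  rintro _ ⟨D', hD', rfl⟩
  exact hmin D' hD'

end PorousExpDom

/-- `γ*_e(K_7) = 4`. -/
theorem kingGrid_seven : porousExpDomNumber (kingGrid 7) = 4 := by
  have hdist : ∀ u v, (kingGrid 7).dist u v ≤ 5 + 1 := fun u v =>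
    kingGrid_dist u v ▸ Nat.le_of_lt_succ (chebyshevDist_lt u v)
  have hD : IsPorousExpDomSet (kingGrid 7) {(1, 1), (1, 5), (5, 1), (5, 5)} := by
    rw [isPorousExpDomSet_iff_two_pow 5 hdist]
    simp only [kingGrid_dist]
    decide
  let corners : Finset (Fin 7 × Fin 7) := {(0, 0), (0, 6), (6, 0), (6, 6)}
  have hcorners : ∀ s ∈ corners, ∀ t ∈ corners, s ≠ t → 4 < (kingGrid 7).dist s t := by
    simp only [kingGrid_dist]
    decide
  refine (porousExpDomNumber_eq_card hD fun D' hD' => ?_).trans (by decide)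
  calc _ = corners.card := by decide
    _ ≤ D'.card := hD'.card_le_of_pairwise_dist kingGrid_preconnected hcorners (by decide)
end

section
/- The limit superior as n → ∞ of γ*_e(S_n)/n² is at most 1/19, where γ*_e(S_n) is the porous exponential domination number of the Slant grid S_n. -/
open SimpleGraph Finset

/-! ### Auxiliary material for the slant grid -/

/-- The triangular-lattice metric, an upper bound for the slant grid distance. -/
def tridist (dx dy : ℤ) : ℕ :=
  if (0 ≤ dx ∧ 0 ≤ dy) ∨ (dx ≤ 0 ∧ dy ≤ 0) then max dx.natAbs dy.natAbs
  else dx.natAbs + dy.natAbs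

lemma tridist_neg (a b : ℤ) : tridist (-a) (-b) = tridist a b := by
  unfold tridist; split <;> split <;> omega

lemma slant_adj (n : ℕ) (u v : Fin n × Fin n)
    (h : (v.1.val = u.1.val + 1 ∧ v.2.val = u.2.val) ∨
         (v.1.val = u.1.val ∧ v.2.val = u.2.val + 1) ∨
         (v.1.val = u.1.val + 1 ∧ v.2.val = u.2.val + 1) ∨
         (u.1.val = v.1.val + 1 ∧ u.2.val = v.2.val) ∨
         (u.1.val = v.1.val ∧ u.2.val = v.2.val + 1) ∨
         (u.1.val = v.1.val + 1 ∧ u.2.val = v.2.val + 1)) :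
    (slantGrid n).Adj u v := by
  rw [slantGrid, SimpleGraph.fromRel_adj]
  refine ⟨by rintro rfl; omega, by tauto⟩

lemma slant_walk (n : ℕ) : ∀ (k : ℕ) (u v : Fin n × Fin n),
    tridist ((v.1.val : ℤ) - u.1.val) ((v.2.val : ℤ) - u.2.val) ≤ k →
    ∃ w : (slantGrid n).Walk u v, w.length ≤ k := by
  intro k
  induction k with
  | zero =>
    intro u v h
    unfold tridist at h
    have : u = v := by
      split at h <;> · refine Prod.ext (Fin.ext ?_) (Fin.ext ?_) <;> omega
    subst this
    exact ⟨.nil, le_refl _⟩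
  | succ k ih =>
    intro u v h
    obtain ⟨⟨a, ha⟩, ⟨b, hb⟩⟩ := u
    obtain ⟨⟨c, hc⟩, ⟨d, hd⟩⟩ := v
    simp only at h ⊢
    unfold tridist at h
    by_cases h0 : a = c ∧ b = d
    · obtain ⟨rfl, rfl⟩ := h0
      exact ⟨.nil, by simp⟩
    have step : ∃ a' b' : ℕ, a' < n ∧ b' < n ∧
        ((a' = a + 1 ∧ b' = b) ∨ (a' = a ∧ b' = b + 1) ∨ (a' = a + 1 ∧ b' = b + 1) ∨
         (a = a' + 1 ∧ b = b') ∨ (a = a' ∧ b = b' + 1) ∨ (a = a' + 1 ∧ b = b' + 1)) ∧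
        tridist ((c : ℤ) - a') ((d : ℤ) - b') ≤ k := by
      unfold tridist
      rcases lt_trichotomy a c with h1 | h1 | h1 <;> rcases lt_trichotomy b d with h2 | h2 | h2
      · exact ⟨a+1, b+1, by omega, by omega, by tauto, by split at h <;> split <;> omega⟩
      · exact ⟨a+1, b, by omega, by omega, by tauto, by split at h <;> split <;> omega⟩
      · exact ⟨a+1, b, by omega, by omega, by tauto, by split at h <;> split <;> omega⟩
      · exact ⟨a, b+1, by omega, by omega, by tauto, by split at h <;> split <;> omega⟩
      · omega
      · exact ⟨a, b-1, by omega, by omega, by omega, by split at h <;> split <;> omega⟩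
      · exact ⟨a-1, b, by omega, by omega, by omega, by split at h <;> split <;> omega⟩
      · exact ⟨a-1, b, by omega, by omega, by omega, by split at h <;> split <;> omega⟩
      · exact ⟨a-1, b-1, by omega, by omega, by omega, by split at h <;> split <;> omega⟩
    obtain ⟨a', b', ha', hb', hrel, htd⟩ := step
    obtain ⟨w', hw'⟩ := ih (⟨a', ha'⟩, ⟨b', hb'⟩) (⟨c, hc⟩, ⟨d, hd⟩) htd
    refine ⟨.cons (slant_adj n _ _ ?_) w', by simp; omega⟩
    simpa using hrel

lemma slant_dist_le (n : ℕ) (u v : Fin n × Fin n) :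
    (slantGrid n).dist u v ≤ tridist ((v.1.val : ℤ) - u.1.val) ((v.2.val : ℤ) - u.2.val) := by
  obtain ⟨w, hw⟩ := slant_walk n _ u v le_rfl
  exact (SimpleGraph.dist_le w).trans hw

lemma expWeight_pos {V : Type*} (G : SimpleGraph V) (u v : V) : 0 < expWeight G u v :=
  zpow_pos (by norm_num) _

lemma weight_ge (n : ℕ) (d v : Fin n × Fin n) (k : ℕ)
    (h : tridist ((v.1.val : ℤ) - d.1.val) ((v.2.val : ℤ) - d.2.val) ≤ k) :
    (2 : ℝ) ^ ((1 : ℤ) - k) ≤ expWeight (slantGrid n) d v := by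
  unfold expWeight
  apply zpow_le_zpow_right₀ one_le_two
  have := (slant_dist_le n d v).trans h
  omega

/-- The offsets (shifted by `(4,4)`) of nearby lattice points used for a vertex whose
residue class is `r`. -/
def offs (r : ℕ) : Finset (ℕ × ℕ) :=
  (Finset.range 9 ×ˢ Finset.range 9).filter fun c =>
    (c.1 + 7 * c.2 + r) % 19 = 13 ∧ tridist ((c.1 : ℤ) - 4) ((c.2 : ℤ) - 4) ≤ 4

lemma offs_sum : ∀ r ∈ Finset.range 19,
    16 ≤ ∑ c ∈ offs r, 2 ^ (5 - tridist ((c.1 : ℤ) - 4) ((c.2 : ℤ) - 4)) := by decide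

lemma offs_sum_real (r : ℕ) (hr : r < 19) :
    1 ≤ ∑ c ∈ offs r, (2 : ℝ) ^ ((1 : ℤ) - (tridist ((c.1 : ℤ) - 4) ((c.2 : ℤ) - 4) : ℤ)) := by
  have h16 := offs_sum r (Finset.mem_range.mpr hr)
  have key : ∑ c ∈ offs r, (2 : ℝ) ^ ((1 : ℤ) - (tridist ((c.1 : ℤ) - 4) ((c.2 : ℤ) - 4) : ℤ))
      = (∑ c ∈ offs r, (2 : ℝ) ^ (5 - tridist ((c.1 : ℤ) - 4) ((c.2 : ℤ) - 4))) / 16 := by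
    rw [Finset.sum_div]
    refine Finset.sum_congr rfl fun c hc => ?_
    have hk : tridist ((c.1 : ℤ) - 4) ((c.2 : ℤ) - 4) ≤ 4 := by
      simp only [offs, Finset.mem_filter] at hc
      exact hc.2.2
    have he : ((1 : ℤ) - (tridist ((c.1 : ℤ) - 4) ((c.2 : ℤ) - 4) : ℤ))
        = ((5 - tridist ((c.1 : ℤ) - 4) ((c.2 : ℤ) - 4) : ℕ) : ℤ) - 4 := by omega
    rw [he, zpow_sub₀ (by norm_num : (2 : ℝ) ≠ 0), zpow_natCast]
    norm_num
  have hcast : (16 : ℝ) ≤ ∑ c ∈ offs r, (2 : ℝ) ^ (5 - tridist ((c.1 : ℤ) - 4) ((c.2 : ℤ) - 4)) := by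
    calc (16 : ℝ) = ((16 : ℕ) : ℝ) := by norm_num
    _ ≤ ((∑ c ∈ offs r, 2 ^ (5 - tridist ((c.1 : ℤ) - 4) ((c.2 : ℤ) - 4)) : ℕ) : ℝ) :=
        Nat.cast_le.mpr h16
    _ = _ := by push_cast; rfl
  rw [key]
  linarith

/-- The dominating set: an index-19 lattice together with a boundary band of width 4. -/
def Dset (n : ℕ) : Finset (Fin n × Fin n) :=
  Finset.univ.filter fun v => ((v.1.val + 7 * v.2.val) % 19 = 0) ∨
    (v.1.val < 4 ∨ v.2.val < 4 ∨ n ≤ v.1.val + 4 ∨ n ≤ v.2.val + 4)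

lemma Dset_dom (n : ℕ) : IsPorousExpDomSet (slantGrid n) (Dset n) := by
  intro v
  by_cases hb : v.1.val < 4 ∨ v.2.val < 4 ∨ n ≤ v.1.val + 4 ∨ n ≤ v.2.val + 4
  · have hv : v ∈ Dset n := by
      simp only [Dset, Finset.mem_filter, Finset.mem_univ, true_and]; tauto
    calc (1 : ℝ) ≤ expWeight (slantGrid n) v v := by
          unfold expWeight; rw [SimpleGraph.dist_self]; norm_num
    _ ≤ ∑ d ∈ Dset n, expWeight (slantGrid n) d v :=
        Finset.single_le_sum (fun i _ => (expWeight_pos _ i v).le) hv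
  · push_neg at hb
    obtain ⟨hx4, hy4, hxn, hyn⟩ := hb
    have hn : 0 < n := by omega
    set x := v.1.val with hxdef
    set y := v.2.val with hydef
    set r := (x + 7 * y) % 19 with hrdef
    have hr : r < 19 := Nat.mod_lt _ (by norm_num)
    set f : ℕ × ℕ → Fin n × Fin n :=
      fun c => (⟨(x - 4 + c.1) % n, Nat.mod_lt _ hn⟩, ⟨(y - 4 + c.2) % n, Nat.mod_lt _ hn⟩)
      with hfdef
    have hmem : ∀ c ∈ offs r, c.1 < 9 ∧ c.2 < 9 ∧ (c.1 + 7 * c.2 + r) % 19 = 13 := by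
      intro c hc
      simp only [offs, Finset.mem_filter, Finset.mem_product, Finset.mem_range] at hc
      exact ⟨hc.1.1, hc.1.2, hc.2.1⟩
    have hfval : ∀ c ∈ offs r, ((f c).1.val = x - 4 + c.1 ∧ (f c).2.val = y - 4 + c.2) := by
      intro c hc
      obtain ⟨h1, h2, _⟩ := hmem c hc
      constructor <;> · simp only [hfdef]; exact Nat.mod_eq_of_lt (by omega)
    have himg : (offs r).image f ⊆ Dset n := by
      intro p hp
      obtain ⟨c, hc, rfl⟩ := Finset.mem_image.mp hp
      obtain ⟨h1, h2, h3⟩ := hmem c hc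
      obtain ⟨e1, e2⟩ := hfval c hc
      simp only [Dset, Finset.mem_filter, Finset.mem_univ, true_and]
      left
      have g1 : (f c).1.val + 7 * (f c).2.val = (x - 4 + c.1) + 7 * (y - 4 + c.2) := by
        rw [e1, e2]
      rw [show ((f c).1.val = (x - 4 + c.1) % n) from rfl] at *
      rw [show ((f c).2.val = (y - 4 + c.2) % n) from rfl] at g1
      omega
    have hinj : Set.InjOn f (offs r) := by
      intro c1 h1 c2 h2 he
      obtain ⟨e11, e12⟩ := hfval c1 h1
      obtain ⟨e21, e22⟩ := hfval c2 h2
      have g1 : (f c1).1.val = (f c2).1.val := by rw [he]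
      have g2 : (f c1).2.val = (f c2).2.val := by rw [he]
      rw [e11, e21] at g1
      rw [e12, e22] at g2
      obtain ⟨q1, q2, _⟩ := hmem c1 h1
      exact Prod.ext (by omega) (by omega)
    calc (1 : ℝ)
        ≤ ∑ c ∈ offs r, (2 : ℝ) ^ ((1 : ℤ) - (tridist ((c.1 : ℤ) - 4) ((c.2 : ℤ) - 4) : ℤ)) :=
          offs_sum_real r hr
    _ ≤ ∑ c ∈ offs r, expWeight (slantGrid n) (f c) v := by
        refine Finset.sum_le_sum fun c hc => ?_
        obtain ⟨e1, e2⟩ := hfval c hc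
        obtain ⟨h1, h2, _⟩ := hmem c hc
        apply weight_ge
        have g1 : ((v.1.val : ℤ) - ((f c).1.val : ℤ)) = -(((c.1 : ℕ) : ℤ) - 4) := by
          rw [e1]; omega
        have g2 : ((v.2.val : ℤ) - ((f c).2.val : ℤ)) = -(((c.2 : ℕ) : ℤ) - 4) := by
          rw [e2]; omega
        rw [g1, g2, tridist_neg]
    _ = ∑ d ∈ (offs r).image f, expWeight (slantGrid n) d v :=
          (Finset.sum_image (f := fun d => expWeight (slantGrid n) d v) (g := f) fun c1 h1 c2 h2 he => hinj h1 h2 he).symm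
    _ ≤ ∑ d ∈ Dset n, expWeight (slantGrid n) d v :=
          Finset.sum_le_sum_of_subset_of_nonneg himg
            (fun i _ _ => (expWeight_pos _ i v).le)

lemma Dset_card (n : ℕ) : (Dset n).card ≤ (n / 19 + 1) * n + 16 * n := by
  classical
  have hsplit : Dset n ⊆
      (Finset.univ.filter fun v : Fin n × Fin n => (v.1.val + 7 * v.2.val) % 19 = 0) ∪
      ((Finset.univ.filter fun v : Fin n × Fin n => v.1.val < 4) ∪
       (Finset.univ.filter fun v : Fin n × Fin n => v.2.val < 4) ∪
       (Finset.univ.filter fun v : Fin n × Fin n => n ≤ v.1.val + 4) ∪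
       (Finset.univ.filter fun v : Fin n × Fin n => n ≤ v.2.val + 4)) := by
    intro v hv
    simp only [Dset, Finset.mem_filter, Finset.mem_univ, true_and] at hv
    simp only [Finset.mem_union, Finset.mem_filter, Finset.mem_univ, true_and]
    tauto
  have hA : (Finset.univ.filter fun v : Fin n × Fin n =>
      (v.1.val + 7 * v.2.val) % 19 = 0).card ≤ (n / 19 + 1) * n := by
    refine le_trans (Finset.card_le_card_of_injOn
      (fun v : Fin n × Fin n => ((v.1.val / 19, v.2) : ℕ × Fin n))
      (t := Finset.range (n / 19 + 1) ×ˢ Finset.univ) ?_ ?_)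
      (le_of_eq (by simp [Finset.card_product, mul_comm]))
    · intro v hv
      simp only [Finset.mem_coe, Finset.mem_product, Finset.mem_range, Finset.mem_univ, and_true]
      have := v.1.isLt
      omega
    · intro v hv w hw he
      simp only [Finset.mem_coe, Finset.mem_filter, Finset.mem_univ, true_and] at hv hw
      obtain ⟨e1', e2'⟩ := Prod.ext_iff.mp he
      have e1 : v.1.val / 19 = w.1.val / 19 := e1'
      have e2 : v.2 = w.2 := e2'
      have e3 : v.2.val = w.2.val := by rw [e2]
      have e4 : v.1 = w.1 := Fin.ext (by omega)
      rw [Prod.ext_iff]; exact ⟨e4, e2⟩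
  have hB : ∀ (g : Fin n × Fin n → ℕ × Fin n) (p : Fin n × Fin n → Prop)
      (_ : DecidablePred p)
      (_ : ∀ v, p v → (g v).1 < 4)
      (_ : ∀ v w, p v → p w → g v = g w → v = w),
      (Finset.univ.filter p).card ≤ 4 * n := by
    intro g p hdec hlt hinj
    refine le_trans (Finset.card_le_card_of_injOn g
      (t := Finset.range 4 ×ˢ Finset.univ) ?_ ?_)
      (le_of_eq (by simp [Finset.card_product]))
    · intro v hv
      simp only [Finset.mem_coe, Finset.mem_filter, Finset.mem_univ, true_and] at hv
      simp only [Finset.mem_coe, Finset.mem_product, Finset.mem_range, Finset.mem_univ, and_true]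
      exact hlt v hv
    · intro v hv w hw he
      simp only [Finset.mem_coe, Finset.mem_filter, Finset.mem_univ, true_and] at hv hw
      exact hinj v w hv hw he
  have hB1 := hB (fun v => (v.1.val, v.2)) (fun v => v.1.val < 4) (by infer_instance)
    (fun v hv => hv)
    (fun v w _ _ he => by
      obtain ⟨e1', e2'⟩ := Prod.ext_iff.mp he
      have e1 : v.1.val = w.1.val := e1'
      have e2 : v.2 = w.2 := e2'
      rw [Prod.ext_iff]; exact ⟨Fin.ext e1, e2⟩)
  have hB2 := hB (fun v => (v.2.val, v.1)) (fun v => v.2.val < 4) (by infer_instance)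
    (fun v hv => hv)
    (fun v w _ _ he => by
      obtain ⟨e1', e2'⟩ := Prod.ext_iff.mp he
      have e1 : v.2.val = w.2.val := e1'
      have e2 : v.1 = w.1 := e2'
      rw [Prod.ext_iff]; exact ⟨e2, Fin.ext e1⟩)
  have hB3 := hB (fun v => (v.1.val + 4 - n, v.2)) (fun v => n ≤ v.1.val + 4) (by infer_instance)
    (fun v hv => by show v.1.val + 4 - n < 4; have := v.1.isLt; omega)
    (fun v w hv hw he => by
      obtain ⟨e1', e2'⟩ := Prod.ext_iff.mp he
      have e1 : v.1.val + 4 - n = w.1.val + 4 - n := e1'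
      have e2 : v.2 = w.2 := e2'
      have := v.1.isLt; have := w.1.isLt
      rw [Prod.ext_iff]; exact ⟨Fin.ext (by omega), e2⟩)
  have hB4 := hB (fun v => (v.2.val + 4 - n, v.1)) (fun v => n ≤ v.2.val + 4) (by infer_instance)
    (fun v hv => by show v.2.val + 4 - n < 4; have := v.2.isLt; omega)
    (fun v w hv hw he => by
      obtain ⟨e1', e2'⟩ := Prod.ext_iff.mp he
      have e1 : v.2.val + 4 - n = w.2.val + 4 - n := e1'
      have e2 : v.1 = w.1 := e2'
      have := v.2.isLt; have := w.2.isLt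
      rw [Prod.ext_iff]; exact ⟨e2, Fin.ext (by omega)⟩)
  calc (Dset n).card ≤ _ := Finset.card_le_card hsplit
  _ ≤ _ + _ := Finset.card_union_le _ _
  _ ≤ (n / 19 + 1) * n + 16 * n := by
      have h4 := Finset.card_union_le
        ((Finset.univ.filter fun v : Fin n × Fin n => v.1.val < 4) ∪
         (Finset.univ.filter fun v : Fin n × Fin n => v.2.val < 4) ∪
         (Finset.univ.filter fun v : Fin n × Fin n => n ≤ v.1.val + 4))
        (Finset.univ.filter fun v : Fin n × Fin n => n ≤ v.2.val + 4)
      have h3 := Finset.card_union_le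
        ((Finset.univ.filter fun v : Fin n × Fin n => v.1.val < 4) ∪
         (Finset.univ.filter fun v : Fin n × Fin n => v.2.val < 4))
        (Finset.univ.filter fun v : Fin n × Fin n => n ≤ v.1.val + 4)
      have h2 := Finset.card_union_le
        (Finset.univ.filter fun v : Fin n × Fin n => v.1.val < 4)
        (Finset.univ.filter fun v : Fin n × Fin n => v.2.val < 4)
      omega

lemma gamma_le (n : ℕ) : porousExpDomNumber (slantGrid n) ≤ (n / 19 + 1) * n + 16 * n := by
  have h : porousExpDomNumber (slantGrid n) ≤ (Dset n).card :=
    Nat.sInf_le ⟨Dset n, Dset_dom n, rfl⟩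
  exact h.trans (Dset_card n)

/-- `limsup_{n → ∞} γ*_e(S_n)/n² ≤ 1/19`. -/
theorem slantGrid_porousExpDomNumber_limsup :
    Filter.limsup (fun n : ℕ => (porousExpDomNumber (slantGrid n) : ℝ) / (n : ℝ) ^ 2)
      Filter.atTop ≤ 1 / 19 := by
  have hg : Filter.Tendsto (fun n : ℕ => 1 / 19 + 17 / (n : ℝ)) Filter.atTop
      (nhds (1 / 19)) := by
    have : Filter.Tendsto (fun n : ℕ => 17 / (n : ℝ)) Filter.atTop (nhds 0) :=
      Filter.Tendsto.div_atTop tendsto_const_nhds tendsto_natCast_atTop_atTop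
    simpa using tendsto_const_nhds.add this
  have hev : ∀ᶠ n : ℕ in Filter.atTop,
      (porousExpDomNumber (slantGrid n) : ℝ) / (n : ℝ) ^ 2 ≤ 1 / 19 + 17 / (n : ℝ) := by
    filter_upwards [Filter.eventually_ge_atTop 1] with n hn
    have hnR : (0 : ℝ) < (n : ℝ) := by exact_mod_cast hn
    have h1 : (porousExpDomNumber (slantGrid n) : ℝ) ≤ ((n / 19 + 1) * n + 16 * n : ℕ) := by
      exact_mod_cast gamma_le n
    have h2 : ((n / 19 + 1) * n + 16 * n : ℕ) ≤ ((n : ℝ) / 19 + 17) * n := by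
      push_cast
      have : ((n / 19 : ℕ) : ℝ) ≤ (n : ℝ) / 19 := Nat.cast_div_le
      nlinarith
    rw [div_le_iff₀ (by positivity)]
    calc (porousExpDomNumber (slantGrid n) : ℝ) ≤ ((n : ℝ) / 19 + 17) * n := h1.trans h2
    _ = (1 / 19 + 17 / (n : ℝ)) * (n : ℝ) ^ 2 := by field_simp
  have hcb : Filter.IsCoboundedUnder (· ≤ ·)
      Filter.atTop (fun n : ℕ => (porousExpDomNumber (slantGrid n) : ℝ) / (n : ℝ) ^ 2) :=
    Filter.isCoboundedUnder_le_of_le Filter.atTop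
      (x := 0) (fun n => by positivity)
  calc Filter.limsup (fun n : ℕ => (porousExpDomNumber (slantGrid n) : ℝ) / (n : ℝ) ^ 2)
        Filter.atTop
      ≤ Filter.limsup (fun n : ℕ => 1 / 19 + 17 / (n : ℝ)) Filter.atTop :=
        Filter.limsup_le_limsup hev hcb hg.isBoundedUnder_le
  _ = 1 / 19 := hg.limsup_eq
end

section
/- For all n ≥ 2, the porous exponential domination number of the hypercube satisfies γ*_e(Q_n) ≤ 2 · γ*_e(Q_{n−2}). -/
open SimpleGraph Finset

/-!
Double a minimum porous exponential dominating set `D` of `Q_{n-2}` into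
`{(d, 0, 0), (d, 1, 1) : d ∈ D}` in `Q_n`. A vertex `(v, a, b)` receives from the pair over `d`
at least what `v` receives from `d`: if `a = b` one member of the pair sits at the same distance
as `d` from `v`, and if `a ≠ b` both sit one step further, each contributing half of it.
-/

lemma hypercube_adj {n : ℕ} {u v : Fin n → Bool} :
    (hypercube n).Adj u v ↔ hammingDist u v = 1 := by
  refine ⟨fun ⟨_, h⟩ => h.elim id fun h => hammingDist_comm u v ▸ h, fun h => ⟨?_, Or.inl h⟩⟩
  rintro rfl
  simp [hammingDist_self] at h

lemma hammingDist_le_length {n : ℕ} {u v : Fin n → Bool} (p : (hypercube n).Walk u v) :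
    hammingDist u v ≤ p.length := by
  induction p with
  | nil => simp
  | @cons a b c hab p ih =>
    have := hammingDist_triangle a b c
    rw [hypercube_adj.mp hab] at this
    rw [Walk.length_cons]
    omega

lemma exists_hypercube_adj_hammingDist_add_one {n : ℕ} {u v : Fin n → Bool} (huv : u ≠ v) :
    ∃ w, (hypercube n).Adj u w ∧ hammingDist w v + 1 = hammingDist u v := by
  obtain ⟨i, hi⟩ := Function.ne_iff.mp huv
  refine ⟨Function.update u i (v i), hypercube_adj.mpr ?_, ?_⟩
  · have : ({j | u j ≠ Function.update u i (v i) j} : Finset (Fin n)) = {i} := by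
      ext j
      rcases eq_or_ne j i with rfl | hj <;> simp [*]
    rw [hammingDist, this, card_singleton]
  · have hmem : i ∈ ({j | u j ≠ v j} : Finset (Fin n)) := by simpa using hi
    have : ({j | Function.update u i (v i) j ≠ v j} : Finset (Fin n)) =
        ({j | u j ≠ v j} : Finset (Fin n)).erase i := by
      ext j
      rcases eq_or_ne j i with rfl | hj <;> simp [*]
    rw [hammingDist, hammingDist, this, card_erase_add_one hmem]

lemma exists_walk_length_eq_hammingDist {n : ℕ} (u v : Fin n → Bool) :
    ∃ p : (hypercube n).Walk u v, p.length = hammingDist u v := by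
  induction h : hammingDist u v generalizing u with
  | zero =>
    obtain rfl := eq_of_hammingDist_eq_zero h
    exact ⟨Walk.nil, rfl⟩
  | succ k ih =>
    have huv : u ≠ v := hammingDist_ne_zero.mp (by omega)
    obtain ⟨w, huw, hw⟩ := exists_hypercube_adj_hammingDist_add_one huv
    obtain ⟨p, hp⟩ := ih w (by omega)
    exact ⟨Walk.cons huw p, by simp [hp]⟩

lemma hypercube_dist {n : ℕ} (u v : Fin n → Bool) :
    (hypercube n).dist u v = hammingDist u v := by
  obtain ⟨p, hp⟩ := exists_walk_length_eq_hammingDist u v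
  obtain ⟨q, hq⟩ := Reachable.exists_walk_length_eq_dist ⟨p⟩
  exact le_antisymm (hp ▸ dist_le p) (hq ▸ hammingDist_le_length q)

lemma expWeight_hypercube {n : ℕ} (u v : Fin n → Bool) :
    expWeight (hypercube n) u v = (2 : ℝ) ^ ((1 : ℤ) - hammingDist u v) := by
  rw [expWeight, hypercube_dist]

lemma hammingDist_snoc {m : ℕ} {α : Type*} [DecidableEq α] (f g : Fin m → α) (a b : α) :
    hammingDist (Fin.snoc f a : Fin (m + 1) → α) (Fin.snoc g b)
      = hammingDist f g + if a = b then 0 else 1 := by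
  simp only [hammingDist, card_filter, Fin.sum_univ_castSucc, Fin.snoc_castSucc, Fin.snoc_last]
  by_cases h : a = b <;> simp [h]

lemma porousExpDomNumber_le_card {V : Type*} [Fintype V] {G : SimpleGraph V} {D : Finset V}
    (hD : IsPorousExpDomSet G D) : porousExpDomNumber G ≤ #D :=
  Nat.sInf_le ⟨D, hD, rfl⟩

lemma isPorousExpDomSet_univ {V : Type*} [Fintype V] (G : SimpleGraph V) :
    IsPorousExpDomSet G univ := fun v =>
  calc (1 : ℝ) ≤ expWeight G v v := by norm_num [expWeight]
    _ ≤ ∑ d, expWeight G d v :=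
      single_le_sum (f := fun d => expWeight G d v) (fun d _ => (zpow_pos two_pos _).le)
        (mem_univ v)

lemma exists_isPorousExpDomSet_card_eq {V : Type*} [Fintype V] (G : SimpleGraph V) :
    ∃ D, IsPorousExpDomSet G D ∧ #D = porousExpDomNumber G :=
  Nat.sInf_mem (s := {k | ∃ D : Finset V, IsPorousExpDomSet G D ∧ #D = k})
    ⟨_, univ, isPorousExpDomSet_univ G, rfl⟩

def doubleSnoc {m : ℕ} (d : Fin m → Bool) (c : Bool) : Fin (m + 2) → Bool :=
  Fin.snoc (Fin.snoc d c) c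

lemma doubleSnoc_injective2 {m : ℕ} : Function.Injective2 (@doubleSnoc m) := by
  intro d d' c c' h
  obtain ⟨h, rfl⟩ := Fin.snoc_injective2 h
  exact ⟨(Fin.snoc_injective2 h).1, rfl⟩

lemma two_zpow_one_sub_eq_add (k : ℤ) :
    (2 : ℝ) ^ (1 - k) = 2 ^ (1 - (k + 1)) + 2 ^ (1 - (k + 1)) := by
  rw [← two_mul, ← zpow_one_add₀ two_ne_zero]
  ring_nf

lemma expWeight_le_doubleSnoc_add {m : ℕ} (d v : Fin m → Bool) (a b : Bool) :
    expWeight (hypercube m) d v ≤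
      expWeight (hypercube (m + 2)) (doubleSnoc d false) (Fin.snoc (Fin.snoc v a) b) +
      expWeight (hypercube (m + 2)) (doubleSnoc d true) (Fin.snoc (Fin.snoc v a) b) := by
  simp only [expWeight_hypercube, doubleSnoc, hammingDist_snoc]
  have hpos (k : ℤ) : (0 : ℝ) ≤ 2 ^ k := (zpow_pos two_pos k).le
  cases a <;> cases b <;> simp only [if_true, if_false, Bool.false_eq_true, Bool.true_eq_false,
    add_zero, le_add_iff_nonneg_right, le_add_iff_nonneg_left, hpos] <;>
    push_cast <;> exact (two_zpow_one_sub_eq_add _).le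

def doubleLift {m : ℕ} (D : Finset (Fin m → Bool)) : Finset (Fin (m + 2) → Bool) :=
  (D ×ˢ univ).image (Function.uncurry doubleSnoc)

lemma card_doubleLift {m : ℕ} (D : Finset (Fin m → Bool)) : #(doubleLift D) = 2 * #D := by
  rw [doubleLift, card_image_of_injective _ doubleSnoc_injective2.uncurry, card_product,
    card_univ, Fintype.card_bool, mul_comm]

lemma IsPorousExpDomSet.doubleLift {m : ℕ} {D : Finset (Fin m → Bool)}
    (hD : IsPorousExpDomSet (hypercube m) D) :
    IsPorousExpDomSet (hypercube (m + 2)) (doubleLift D) := by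
  intro w
  obtain ⟨v, a, b, rfl⟩ : ∃ v a b, Fin.snoc (Fin.snoc v a) b = w :=
    ⟨_, _, _, (congrArg (Fin.snoc · _) (Fin.snoc_init_self _)).trans (Fin.snoc_init_self w)⟩
  rw [_root_.doubleLift, sum_image (fun _ _ _ _ h => doubleSnoc_injective2.uncurry h),
    sum_product]
  refine (hD v).trans (sum_le_sum fun d _ => ?_)
  rw [Fintype.sum_bool, add_comm]
  exact expWeight_le_doubleSnoc_add d v a b

/-- For `n ≥ 2`, `γ*_e(Q_n) ≤ 2·γ*_e(Q_{n−2})`. -/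
theorem hypercube_porousExpDomNumber_descent (n : ℕ) (hn : 2 ≤ n) :
    porousExpDomNumber (hypercube n) ≤ 2 * porousExpDomNumber (hypercube (n - 2)) := by
  obtain ⟨m, rfl⟩ : ∃ m, n = m + 2 := ⟨n - 2, by omega⟩
  obtain ⟨D, hD, hcard⟩ := exists_isPorousExpDomSet_card_eq (hypercube m)
  calc porousExpDomNumber (hypercube (m + 2)) ≤ #(doubleLift D) :=
        porousExpDomNumber_le_card hD.doubleLift
    _ = 2 * porousExpDomNumber (hypercube m) := by rw [card_doubleLift, hcard]
end
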